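/- Let X be an abelian variety over ℂ and F a subfield of End(X)⊗ℚ. If F admits an embedding into ℝ (has a real prime), then [F:ℚ] divides dim X. -/

import Mathlib

/-!
An element `α ∈ F` acts on `V` with determinant `N_{F/ℚ}(α) ^ m`, where `m = dim_F V` and
`[F : ℚ] * m = 2g`. A real embedding of `F` produces an element of negative norm: for a primitive
element `θ`, `N(q - θ)` is the minimal polynomial of `θ` evaluated at `q ∈ ℚ`, and this polynomial
changes sign at its simple real root. Nonnegativity of the determinants then forces `m` to be even,
i.e. `[F : ℚ] ∣ g`.
-/

open Module Polynomial

theorem DistribSMul.det_toLinearMap_eq_norm_pow (K L V : Type*) [Field K] [Field L]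
    [Algebra K L] [AddCommGroup V] [Module K V] [Module L V] [IsScalarTower K L V] (α : L) :
    LinearMap.det (DistribSMul.toLinearMap K V α) = Algebra.norm K α ^ finrank L V := by
  have h : DistribSMul.toLinearMap K V α
      = (α • LinearMap.id : V →ₗ[L] V).restrictScalars K := rfl
  rw [h, LinearMap.det_restrictScalars, LinearMap.det_smul, LinearMap.det_id, mul_one, map_pow]

theorem PowerBasis.norm_algebraMap_sub_gen {K L : Type*} [Field K] [CommRing L] [Algebra K L]
    (pb : PowerBasis K L) (q : K) :
    Algebra.norm K (algebraMap K L q - pb.gen) = (minpoly K pb.gen).eval q := by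
  rw [Algebra.norm_eq_matrix_det pb.basis, ← charpoly_leftMulMatrix, Matrix.eval_charpoly,
    map_sub, AlgHom.commutes, Matrix.algebraMap_eq_diagonal]
  rfl

theorem Polynomial.exists_eval_neg_of_separable {P : ℝ[X]} (hP : P.Separable) {t : ℝ}
    (ht : P.IsRoot t) : ∃ x, P.eval x < 0 := by
  by_contra! hnonneg
  have hmin : IsLocalMin (fun x => P.eval x) t :=
    Filter.Eventually.of_forall fun x => ht.eq_zero.le.trans (hnonneg x)
  exact hP.aeval_derivative_ne_zero (x := t) (by simpa using ht)
    (by simpa using hmin.hasDerivAt_eq_zero (P.hasDerivAt t))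

theorem exists_norm_neg_of_ringHom_real (F : Type*) [Field F] [Algebra ℚ F]
    [FiniteDimensional ℚ F] (σ : F →+* ℝ) : ∃ α : F, Algebra.norm ℚ α < 0 := by
  let pb := Field.powerBasisOfFiniteOfSeparable ℚ F
  set P := (minpoly ℚ pb.gen).map (algebraMap ℚ ℝ)
  have hroot : P.IsRoot (σ pb.gen) := by
    rw [IsRoot, eval_map_algebraMap, ← σ.toRatAlgHom_apply, aeval_algHom_apply, minpoly.aeval,
      map_zero]
  obtain ⟨x, hx⟩ := P.exists_eval_neg_of_separable
    (Separable.map (Algebra.IsSeparable.isSeparable ℚ pb.gen)) hroot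
  obtain ⟨q, hq⟩ := Rat.denseRange_cast.exists_mem_open
    (isOpen_lt P.continuous continuous_const) ⟨x, hx⟩
  refine ⟨algebraMap ℚ F q - pb.gen, ?_⟩
  rw [pb.norm_algebraMap_sub_gen]
  have hcast : P.eval (q : ℝ) = (((minpoly ℚ pb.gen).eval q : ℚ) : ℝ) := by
    simpa [P, eval_map_algebraMap] using
      aeval_algebraMap_apply_eq_algebraMap_eval (A := ℝ) q (minpoly ℚ pb.gen)
  have hq' : P.eval (q : ℝ) < 0 := hq
  exact_mod_cast hcast ▸ hq'

theorem degree_dvd_dim_of_real_prime_general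
    (F : Type*) [Field F] [Algebra ℚ F] [FiniteDimensional ℚ F]
    (g : ℕ) (V : Type*) [AddCommGroup V] [Module ℚ V]
    [Module F V] [IsScalarTower ℚ F V]
    (hdim : finrank ℚ V = 2 * g)
    (hdet : ∀ α : F, 0 ≤ LinearMap.det (DistribMulAction.toLinearMap ℚ V α))
    (hreal : Nonempty (F →+* ℝ)) :
    finrank ℚ F ∣ g := by
  obtain ⟨σ⟩ := hreal
  obtain ⟨α, hα⟩ := exists_norm_neg_of_ringHom_real F σ
  have hm : finrank ℚ F * finrank F V = 2 * g := by rw [finrank_mul_finrank, hdim]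
  obtain ⟨k, hk⟩ : Even (finrank F V) := by
    by_contra hodd
    have hneg := (Nat.not_even_iff_odd.mp hodd).pow_neg hα
    rw [← DistribSMul.det_toLinearMap_eq_norm_pow] at hneg
    exact (hdet α).not_gt hneg
  exact ⟨k, by rw [hk] at hm; linarith⟩

/-- **Real primes of endomorphism fields divide the dimension.**  Let `X` be an abelian
variety over `ℂ` of dimension `g` and `F` a subfield of `End(X) ⊗ ℚ`.  We model this by the
faithful action of the number field `F` on the homology `V = H₁(X, ℚ)`, a `ℚ`-vector space of
dimension `2g`, together with the positivity of degrees: for every `α ∈ F ⊆ End(X) ⊗ ℚ` the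
determinant of `α` acting `ℚ`-linearly on `V` equals `deg α ≥ 0` (up to the square scaling of
quasi-isogenies).  If `F` admits an embedding into `ℝ` (has a real prime), then `[F : ℚ]`
divides `g = dim X`. -/
theorem degree_dvd_dim_of_real_prime
    (F : Type*) [Field F] [Algebra ℚ F] [FiniteDimensional ℚ F]
    (g : ℕ) (V : Type*) [AddCommGroup V] [Module ℚ V] [FiniteDimensional ℚ V]
    [Module F V] [IsScalarTower ℚ F V] [SMulCommClass F ℚ V] [FaithfulSMul F V]
    (hdim : finrank ℚ V = 2 * g)
    (hdet : ∀ α : F, 0 ≤ LinearMap.det (DistribMulAction.toLinearMap ℚ V α))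
    (hreal : Nonempty (F →+* ℝ)) :
    finrank ℚ F ∣ g :=
  degree_dvd_dim_of_real_prime_general F g V hdim hdet hreal
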